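/- For effects E, F on a Hilbert space, the infimum λ₀ of Λ(E,F) = {λ ∈ ℝ | ∃ effect G with G ≤ E, G ≤ F, E + F ≤ G + λI} is attained: λ₀ ∈ Λ(E,F). -/

import Mathlib

/-!
The pairs `(G, λ)` satisfying the constraints form a closed subset of `B(H) × ℝ`, where `B(H)`
carries the weak operator topology, because positivity is a WOT-closed condition. Their first
components are effects, hence lie in the unit ball, which is WOT-compact. Projecting away a compact
factor is a closed map, so `Λ(E,F)` is closed; it contains `2` (take `G = 0`) and is bounded
below by `0` (as `λ • 1 ≥ E + (F - G) ≥ 0`), so it contains its infimum.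
-/

open Filter Topology
open scoped InnerProductSpace

namespace ContinuousLinearMapWOT

variable {𝕜 H : Type*} [RCLike 𝕜] [NormedAddCommGroup H] [InnerProductSpace 𝕜 H] [CompleteSpace H]

theorem continuous_inner_apply_left (x y : H) :
    Continuous fun A : H →WOT[𝕜] H => ⟪A x, y⟫_𝕜 := by
  simpa only [Function.comp_def, id, inner_conj_symm] using
    (RCLike.continuous_conj (K := 𝕜)).comp (continuous_inner_apply continuous_id x y)

theorem isClosed_setOf_isPositive : IsClosed {A : H →WOT[𝕜] H | A.toCLM.IsPositive} := by
  simp only [ContinuousLinearMap.isPositive_def, LinearMap.IsSymmetric,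
    ContinuousLinearMap.reApplyInnerSelf, Set.ofPred_and, Set.ofPred_forall]
  refine (isClosed_iInter fun x => isClosed_iInter fun y => isClosed_eq ?_ ?_).inter
    (isClosed_iInter fun x => isClosed_le continuous_const ?_)
  · exact continuous_inner_apply_left x y
  · exact continuous_inner_apply continuous_id y x
  · exact RCLike.continuous_re.comp (continuous_inner_apply_left x x)

theorem isCompact_setOf_norm_le (r : ℝ) : IsCompact {A : H →WOT[𝕜] H | ‖A.toCLM‖ ≤ r} := by
  refine isCompact_iff_ultrafilter_le_nhds'.2 fun U hU => ?_
  have hr : 0 ≤ r := (norm_nonneg _).trans (U.nonempty_of_mem hU).choose_spec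
  have hbound : ∀ᶠ A : H →WOT[𝕜] H in U, ∀ v w, ‖⟪A v, w⟫_𝕜‖ ≤ r * ‖v‖ * ‖w‖ :=
    mem_of_superset hU fun A (hA : ‖A.toCLM‖ ≤ r) v w =>
      (norm_inner_le_norm _ _).trans (by gcongr; exact A.toCLM.le_of_opNorm_le hA v)
  have hlim : ∀ v w : H, ∃ z, Tendsto (fun A : H →WOT[𝕜] H => ⟪A v, w⟫_𝕜) U (𝓝 z) := by
    intro v w
    obtain ⟨z, -, hz⟩ := (isCompact_closedBall (0 : 𝕜) (r * ‖v‖ * ‖w‖)).ultrafilter_le_nhds'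
      (U.map fun A => ⟪A v, w⟫_𝕜) (Ultrafilter.mem_map.2 (hbound.mono fun A hA => by
        simpa only [Set.mem_preimage, mem_closedBall_zero_iff] using hA v w))
    exact ⟨z, hz⟩
  choose L hL using hlim
  -- The limit of the matrix coefficients is a bounded sesquilinear form; Riesz represents it.
  let B : H →L⋆[𝕜] H →L[𝕜] 𝕜 := LinearMap.mkContinuous₂
    (LinearMap.mk₂'ₛₗ (starRingEnd 𝕜) (RingHom.id 𝕜) L
      (fun v v' w => tendsto_nhds_unique (hL _ _) <| by
        simpa only [map_add, inner_add_left] using (hL v w).add (hL v' w))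
      (fun c v w => tendsto_nhds_unique (hL _ _) <| by
        simpa only [map_smul, inner_smul_left, smul_eq_mul] using (hL v w).const_mul _)
      (fun v w w' => tendsto_nhds_unique (hL _ _) <| by
        simpa only [inner_add_right] using (hL v w).add (hL v w'))
      (fun c v w => tendsto_nhds_unique (hL _ _) <| by
        simpa only [inner_smul_right, RingHom.id_apply, smul_eq_mul] using (hL v w).const_mul _))
    r fun v w => le_of_tendsto (hL v w).norm (hbound.mono fun A hA => hA v w)
  let T := InnerProductSpace.continuousLinearMapOfBilin B
  refine ⟨ofCLM T, ?_, ?_⟩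
  · refine ContinuousLinearMap.opNorm_le_bound _ hr fun v => ?_
    calc ‖T v‖ = ‖B v‖ := (InnerProductSpace.toDual 𝕜 H).symm.norm_map (B v)
      _ ≤ r * ‖v‖ := B.le_of_opNorm_le (LinearMap.mkContinuous₂_norm_le _ hr _) v
  · refine le_nhds_iff_forall_inner_apply_le_nhds.2 fun x y => ?_
    have hT : ⟪T x, y⟫_𝕜 = L x y := InnerProductSpace.continuousLinearMapOfBilin_apply B x y
    have := ((RCLike.continuous_conj (K := 𝕜)).tendsto _).comp (hL x y)
    simp only [Function.comp_def, ← hT, inner_conj_symm] at this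
    exact this

end ContinuousLinearMapWOT

theorem IsCompact.isClosed_image_snd {X Y : Type*} [TopologicalSpace X] [TopologicalSpace Y]
    {K : Set X} (hK : IsCompact K) {C : Set (X × Y)} (hC : IsClosed C)
    (hCK : ∀ p ∈ C, p.1 ∈ K) : IsClosed (Prod.snd '' C) := by
  have : CompactSpace K := isCompact_iff_compactSpace.mp hK
  have hC' : IsClosed {p : K × Y | ((p.1 : X), p.2) ∈ C} :=
    hC.preimage (continuous_subtype_val.prodMap continuous_id)
  convert isClosedMap_snd_of_compactSpace _ hC' using 1
  ext y
  constructor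
  · rintro ⟨p, hp, rfl⟩
    exact ⟨(⟨p.1, hCK p hp⟩, p.2), hp, rfl⟩
  · rintro ⟨p, hp, rfl⟩
    exact ⟨_, hp, rfl⟩

theorem ContinuousLinearMap.nonneg_of_isPositive_smul_one {H : Type*} [NormedAddCommGroup H]
    [InnerProductSpace ℂ H] [Nontrivial H] {l : ℝ}
    (h : (l • (1 : H →L[ℂ] H)).IsPositive) : 0 ≤ l := by
  obtain ⟨x, hx⟩ := exists_ne (0 : H)
  have hl := h.re_inner_nonneg_left x
  rw [smul_apply, one_apply_eq_self, RCLike.real_smul_eq_coe_smul (K := ℂ), inner_smul_real_left,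
    RCLike.smul_re, inner_self_eq_norm_sq] at hl
  exact nonneg_of_mul_nonneg_left hl (by positivity)

open ContinuousLinearMap ContinuousLinearMapWOT

section Lambda

variable {H : Type*} [NormedAddCommGroup H] [InnerProductSpace ℂ H]

def IsLambdaWitness (E F G : H →L[ℂ] H) (l : ℝ) : Prop :=
  (G.IsPositive ∧ (1 - G).IsPositive) ∧
    (E - G).IsPositive ∧ (F - G).IsPositive ∧ ((G + l • 1) - (E + F)).IsPositive

def lambdaSet (E F : H →L[ℂ] H) : Set ℝ :=
  {l | ∃ G, IsLambdaWitness E F G l}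

theorem two_mem_lambdaSet {E F : H →L[ℂ] H} (hE : E.IsPositive) (hE1 : (1 - E).IsPositive)
    (hF : F.IsPositive) (hF1 : (1 - F).IsPositive) : 2 ∈ lambdaSet E F := by
  refine ⟨0, ⟨isPositive_zero, by simp [isPositive_one]⟩, by simpa using hE,
    by simpa using hF, ?_⟩
  convert hE1.add hF1 using 1
  module

theorem nonneg_of_mem_lambdaSet [Nontrivial H] {E F : H →L[ℂ] H} (hE : E.IsPositive) {l : ℝ}
    (hl : l ∈ lambdaSet E F) : 0 ≤ l := by
  obtain ⟨G, -, -, hFG, hGl⟩ := hl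
  refine nonneg_of_isPositive_smul_one (H := H) ?_
  convert (hGl.add hFG).add hE using 1
  abel

theorem isClosed_lambdaSet [CompleteSpace H] (E F : H →L[ℂ] H) : IsClosed (lambdaSet E F) := by
  let C : Set ((H →WOT[ℂ] H) × ℝ) := {p | IsLambdaWitness E F p.1.toCLM p.2}
  have hC : IsClosed C := by
    have closed {f : (H →WOT[ℂ] H) × ℝ → H →WOT[ℂ] H} (hf : Continuous f) :
        IsClosed {p | (f p).toCLM.IsPositive} :=
      isClosed_setOf_isPositive.preimage hf
    exact ((closed continuous_fst).inter (closed (f := fun p => 1 - p.1) (by fun_prop))).inter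
      ((closed (f := fun p => ofCLM E - p.1) (by fun_prop)).inter
      ((closed (f := fun p => ofCLM F - p.1) (by fun_prop)).inter
      (closed (f := fun p => p.1 + p.2 • 1 - ofCLM (E + F)) (by fun_prop))))
  have hCK : ∀ p ∈ C, p.1 ∈ {A : H →WOT[ℂ] H | ‖A.toCLM‖ ≤ 1} := fun p hp =>
    (CStarAlgebra.mem_Icc_iff_norm_le_one.mp ⟨(nonneg_iff_isPositive _).mpr hp.1.1, hp.1.2⟩).2
  have hS : Prod.snd '' C = lambdaSet E F := by
    ext l
    exact ⟨fun ⟨p, hp, hpl⟩ => hpl ▸ ⟨p.1.toCLM, hp⟩, fun ⟨G, hG⟩ => ⟨(ofCLM G, l), hG, rfl⟩⟩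
  exact hS ▸ (isCompact_setOf_norm_le 1).isClosed_image_snd hC hCK

end Lambda

/-- For effects `E, F` on a complex Hilbert space, the infimum of
`Λ(E,F) = {λ | ∃ effect G, G ≤ E, G ≤ F, E + F ≤ G + λI}` (Loewner order) is attained. -/
theorem inf_lambda_attained {H : Type*} [NormedAddCommGroup H] [InnerProductSpace ℂ H]
    [CompleteSpace H] (E F : H →L[ℂ] H)
    (hE : E.IsPositive) (hE1 : (1 - E).IsPositive)
    (hF : F.IsPositive) (hF1 : (1 - F).IsPositive) :
    sInf {l : ℝ | ∃ G : H →L[ℂ] H, (G.IsPositive ∧ (1 - G).IsPositive) ∧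
        (E - G).IsPositive ∧ (F - G).IsPositive ∧ ((G + l • 1) - (E + F)).IsPositive} ∈
      {l : ℝ | ∃ G : H →L[ℂ] H, (G.IsPositive ∧ (1 - G).IsPositive) ∧
        (E - G).IsPositive ∧ (F - G).IsPositive ∧ ((G + l • 1) - (E + F)).IsPositive} := by
  change sInf (lambdaSet E F) ∈ lambdaSet E F
  rcases subsingleton_or_nontrivial H with hH | hH
  -- On the zero space `Λ(E,F) = ℝ`, whose junk infimum `0` lies in it.
  · have hpos (T : H →L[ℂ] H) : T.IsPositive := Subsingleton.elim 0 T ▸ isPositive_zero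
    exact ⟨0, ⟨hpos _, hpos _⟩, hpos _, hpos _, hpos _⟩
  exact (isClosed_lambdaSet E F).csInf_mem ⟨2, two_mem_lambdaSet hE hE1 hF hF1⟩
    ⟨0, fun l => nonneg_of_mem_lambdaSet hE⟩
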